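/- The number of vertices labeled by n in the k-extended action graph A^k_n equals C^k_n, the n-th term of the k-th self-convolution of the Catalan sequence; equivalently (via the bijection with forests), the number of leaves of A^k_n equals the number of ordered forests of k+1 planar rooted trees with n edges. -/

import Mathlib

/-- Convolution of sequences: `(A ∗ B) n = ∑_{m=0}^n A m * B (n-m)`. -/
def seqConv (A B : ℕ → ℕ) (n : ℕ) : ℕ := ∑ m ∈ Finset.range (n + 1), A m * B (n - m)

/-- `catConv k` is the `k`-th self-convolution of the Catalan sequence
(the convolution of `k+1` copies of `catalan`). -/
def catConv : ℕ → ℕ → ℕ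
  | 0 => catalan
  | k + 1 => seqConv (catConv k) catalan

/-- A planar rooted tree: an ordered list of planar rooted subtrees. -/
inductive PTree : Type where
  | node : List PTree → PTree

/-- Number of edges of a planar rooted tree. -/
def PTree.edges : PTree → ℕ
  | .node ts => ts.length + (ts.attach.map (fun t => PTree.edges t.1)).sum
decreasing_by
  simp [PTree.node.sizeOf_spec, Nat.add_comm 1]
  exact (List.sizeOf_lt_of_mem t.2).le

/-- A directed graph with vertices labeled by integers.  Trivial (loop) edges at
each vertex are left implicit; `E` records the nontrivial edges. -/
structure LGraph where
  V : Type
  E : V → V → Prop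
  label : V → ℤ

/-- Directed paths in `G` ending at a vertex labeled `n`, recorded as the list of
vertices visited.  A singleton list is the trivial path at a vertex. -/
def LGraph.Paths (G : LGraph) (n : ℤ) : Type :=
  {l : List G.V // l ≠ [] ∧ l.Chain' G.E ∧ ∃ v, l.getLast? = some v ∧ G.label v = n}

/-- One inductive step: for each directed path ending at a vertex labeled `n`
(including the trivial path), adjoin a new edge from the initial vertex of the
path to a new vertex labeled `n + 1`. -/
def LGraph.step (G : LGraph) (n : ℤ) : LGraph where
  V := G.V ⊕ G.Paths n
  E := fun a b =>
    match a, b with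
    | .inl u, .inl v => G.E u v
    | .inl u, .inr p => p.1.head? = some u
    | _, _ => False
  label := Sum.elim G.label fun _ => n + 1

/-- The initial graph `A^k_0`: a directed path on `k+1` vertices labeled `-k, …, -1, 0`. -/
def baseGraph (k : ℕ) : LGraph where
  V := Fin (k + 1)
  E := fun i j => (j : ℕ) = (i : ℕ) + 1
  label := fun i => (i : ℤ) - (k : ℤ)

/-- The `k`-extended action graph `A^k_n`. -/
def actionGraph (k : ℕ) : ℕ → LGraph
  | 0 => baseGraph k
  | n + 1 => (actionGraph k n).step n

/-!
The vertices of `A^k_n` labeled `n` and the forests of `k + 1` planar trees with `n` edges both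
grow by the Catalan succession rule `(d) ↦ (1)(2)⋯(d+1)` from a single object with statistic `k`.
For a vertex the statistic is its depth `d` in `A^k_n`, which is a tree rooted at the first vertex
of the base path: exactly `d + 1` paths end at the vertex, and the new vertex attached along the
path starting at depth `j` has depth `j + 1`. For a forest it is the length `d` of its leftmost
branch: a leaf can be attached as new first child of any of the `d + 1` vertices of that branch,
and attaching it at depth `j` leaves a leftmost branch of length `j + 1`. So the two families are
in bijection level by level. Splitting off the last tree counts the forests by the convolution of
`k + 1` Catalan sequences, as planar trees with `m` edges are binary trees with `m` nodes.
-/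

/-- Two families of levelled objects that grow by the same succession rule from isomorphic roots
are isomorphic level by level. -/
theorem exists_equiv_of_succession {X Y C : ℕ → Type*} (rule : ∀ d, C d → ℕ)
    (s : ∀ n, X n → ℕ) (t : ∀ n, Y n → ℕ) (e₀ : X 0 ≃ Y 0) (he₀ : ∀ x, t 0 (e₀ x) = s 0 x)
    (eX : ∀ n, (Σ x : X n, C (s n x)) ≃ X (n + 1)) (hX : ∀ n p, s (n + 1) (eX n p) = rule _ p.2)
    (eY : ∀ n, (Σ y : Y n, C (t n y)) ≃ Y (n + 1)) (hY : ∀ n p, t (n + 1) (eY n p) = rule _ p.2)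
    (n : ℕ) : ∃ e : X n ≃ Y n, ∀ x, t n (e x) = s n x := by
  induction n with
  | zero => exact ⟨e₀, he₀⟩
  | succ n ih =>
    obtain ⟨e, he⟩ := ih
    have rule_cast {a b} (h : a = b) (c : C a) :
        rule b (Equiv.cast (congrArg C h) c) = rule a c := by
      subst h; rfl
    let σ : (Σ x : X n, C (s n x)) ≃ Σ y : Y n, C (t n y) :=
      Equiv.sigmaCongr e fun x => Equiv.cast (congrArg C (he x).symm)
    refine ⟨(eX n).symm.trans (σ.trans (eY n)), fun x => ?_⟩
    obtain ⟨⟨x, c⟩, rfl⟩ := (eX n).surjective x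
    simp only [Equiv.trans_apply, Equiv.symm_apply_apply, hX, hY]
    exact rule_cast (he x).symm c

section WeightedTuples

variable {α β : Type*}

theorem finite_setOf_le (w : α → ℕ) [∀ m, Finite {a // w a = m}] (n : ℕ) :
    {a | w a ≤ n}.Finite := by
  have : {a | w a ≤ n} = ⋃ m ∈ Set.Iic n, {a | w a = m} := by ext; simp
  rw [this]
  exact (Set.finite_Iic n).biUnion fun m _ =>
    Set.finite_coe_iff.mp (inferInstanceAs (Finite {a // w a = m}))

instance finite_sum_weight_eq (w : α → ℕ) [∀ m, Finite {a // w a = m}] {ι : Type*} [Fintype ι]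
    (n : ℕ) : Finite {f : ι → α // ∑ j, w (f j) = n} := by
  refine Set.Finite.subset (Set.Finite.pi (t := fun _ => {a | w a ≤ n})
    fun _ => finite_setOf_le w n) ?_
  rintro f hf j -
  exact hf ▸ Finset.single_le_sum (fun j _ => Nat.zero_le (w (f j))) (Finset.mem_univ j)

theorem card_weight_add_eq (u : α → ℕ) (v : β → ℕ) [∀ m, Finite {a // u a = m}]
    [∀ m, Finite {b // v b = m}] (n : ℕ) :
    Nat.card {p : α × β // u p.1 + v p.2 = n} =
      seqConv (fun m => Nat.card {a // u a = m}) (fun m => Nat.card {b // v b = m}) n := by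
  let e : {p : α × β // u p.1 + v p.2 = n} ≃
      Σ m : Fin (n + 1), {a // u a = m} × {b // v b = n - m} :=
    { toFun p := ⟨⟨u p.1.1, by omega⟩, ⟨p.1.1, rfl⟩, ⟨p.1.2, by simp only; omega⟩⟩
      invFun q := ⟨(q.2.1, q.2.2), by have := q.1.2; simp only [q.2.1.2, q.2.2.2]; omega⟩
      left_inv _ := rfl
      right_inv := by
        rintro ⟨⟨m, hm⟩, ⟨a, ha⟩, b⟩
        obtain rfl : u a = m := ha
        rfl }
  rw [Nat.card_congr e, Nat.card_sigma, seqConv, ← Fin.sum_univ_eq_sum_range]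
  simp only [Nat.card_prod]

theorem card_sum_weight_eq_succ (w : α → ℕ) [∀ m, Finite {a // w a = m}] (k n : ℕ) :
    Nat.card {f : Fin (k + 2) → α // ∑ j, w (f j) = n} =
      seqConv (fun m => Nat.card {f : Fin (k + 1) → α // ∑ j, w (f j) = m})
        (fun m => Nat.card {a // w a = m}) n := by
  rw [← card_weight_add_eq]
  refine Nat.card_congr (((Fin.snocEquiv fun _ => α).symm.trans (Equiv.prodComm _ _)).subtypeEquiv
    fun f => ?_)
  simp [Fin.sum_univ_castSucc, Fin.snocEquiv, Fin.init]

end WeightedTuples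

namespace PTree

def kids : PTree → List PTree
  | node ts => ts

theorem edges_node (ts : List PTree) : (node ts).edges = ts.length + (ts.map edges).sum := by
  rw [edges, List.attach_map_val]

/-- The first-child/next-sibling encoding of a list of planar trees as a binary tree. -/
def listToBinary : List PTree → BinaryTree Unit
  | [] => .nil
  | node cs :: rest => .node () (listToBinary cs) (listToBinary rest)

def binaryToList : BinaryTree Unit → List PTree
  | .nil => []
  | .node _ l r => node (binaryToList l) :: binaryToList r

theorem binaryToList_listToBinary (ts : List PTree) : binaryToList (listToBinary ts) = ts := by
  induction ts using listToBinary.induct <;> simp_all [listToBinary, binaryToList]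

theorem listToBinary_binaryToList (b : BinaryTree Unit) : listToBinary (binaryToList b) = b := by
  induction b <;> simp_all [listToBinary, binaryToList]

theorem numNodes_listToBinary (ts : List PTree) : (listToBinary ts).numNodes = (node ts).edges := by
  induction ts using listToBinary.induct with
  | case1 => simp [listToBinary, edges_node]
  | case2 cs rest ihcs ihrest =>
    simp only [listToBinary, BinaryTree.numNodes, ihcs, ihrest, edges_node, List.map_cons,
      List.sum_cons, List.length_cons]
    ring

def equivBinaryTree : PTree ≃ BinaryTree Unit where
  toFun t := listToBinary t.kids
  invFun b := node (binaryToList b)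
  left_inv := fun ⟨ts⟩ => by simp [kids, binaryToList_listToBinary]
  right_inv := listToBinary_binaryToList

theorem numNodes_equivBinaryTree (t : PTree) : (equivBinaryTree t).numNodes = t.edges := by
  obtain ⟨ts⟩ := t
  exact numNodes_listToBinary ts

def edgesEqEquiv (n : ℕ) :
    {t : PTree // t.edges = n} ≃ BinaryTree.treesOfNumNodesEq n :=
  equivBinaryTree.subtypeEquiv fun t => by
    rw [BinaryTree.mem_treesOfNumNodesEq, numNodes_equivBinaryTree]

instance finite_edges_eq (n : ℕ) : Finite {t : PTree // t.edges = n} :=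
  .of_equiv _ (edgesEqEquiv n).symm

theorem card_edges_eq (n : ℕ) : Nat.card {t : PTree // t.edges = n} = catalan n := by
  rw [Nat.card_congr (edgesEqEquiv n), Nat.card_eq_finsetCard,
    BinaryTree.treesOfNumNodesEq_card_eq_catalan]

end PTree

theorem card_sum_edges_eq (k n : ℕ) :
    Nat.card {f : Fin (k + 1) → PTree // ∑ j, (f j).edges = n} = catConv k n := by
  induction k generalizing n with
  | zero =>
    rw [catConv, ← PTree.card_edges_eq]
    exact Nat.card_congr ((Equiv.funUnique (Fin 1) PTree).subtypeEquiv fun f => by simp)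
  | succ k ih =>
    rw [card_sum_weight_eq_succ]
    simp only [ih, PTree.card_edges_eq]
    rfl

namespace PTree

def leftDepth : PTree → ℕ
  | node [] => 0
  | node (c :: _) => c.leftDepth + 1

/-- Attach a new first child to the vertex at depth `j` on the leftmost branch. -/
def addLeftLeaf : ℕ → PTree → PTree
  | 0, node ts => node (node [] :: ts)
  | _ + 1, node [] => node []
  | j + 1, node (c :: cs) => node (addLeftLeaf j c :: cs)

def eraseLeftLeaf : PTree → PTree
  | node [] => node []
  | node (node [] :: cs) => node cs
  | node (c :: cs) => node (eraseLeftLeaf c :: cs)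

theorem leftDepth_eq_zero_iff {t : PTree} : t.leftDepth = 0 ↔ t = node [] := by
  obtain ⟨_ | ⟨c, cs⟩⟩ := t <;> simp [leftDepth]

theorem edges_eq_zero_iff {t : PTree} : t.edges = 0 ↔ t = node [] := by
  obtain ⟨_ | ⟨c, cs⟩⟩ := t <;> simp [edges_node]

theorem addLeftLeaf_ne_leaf (j : ℕ) {t : PTree} (h : j ≤ t.leftDepth) :
    t.addLeftLeaf j ≠ node [] := by
  fun_induction addLeftLeaf <;> simp_all [leftDepth]

theorem leftDepth_addLeftLeaf {j : ℕ} {t : PTree} (h : j ≤ t.leftDepth) :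
    (t.addLeftLeaf j).leftDepth = j + 1 := by
  fun_induction addLeftLeaf <;> simp_all [leftDepth]

theorem edges_addLeftLeaf {j : ℕ} {t : PTree} (h : j ≤ t.leftDepth) :
    (t.addLeftLeaf j).edges = t.edges + 1 := by
  fun_induction addLeftLeaf <;> simp_all [leftDepth, edges_node] <;> omega

theorem eraseLeftLeaf_addLeftLeaf {j : ℕ} {t : PTree} (h : j ≤ t.leftDepth) :
    (t.addLeftLeaf j).eraseLeftLeaf = t := by
  fun_induction addLeftLeaf with
  | case1 => rw [eraseLeftLeaf]
  | case2 => simp [leftDepth] at h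
  | case3 j c cs ih =>
    replace h : j ≤ c.leftDepth := Nat.succ_le_succ_iff.mp h
    rw [eraseLeftLeaf.eq_3 _ _ (addLeftLeaf_ne_leaf j h), ih h]

theorem sub_one_le_leftDepth_eraseLeftLeaf (t : PTree) :
    t.leftDepth - 1 ≤ t.eraseLeftLeaf.leftDepth := by
  fun_induction eraseLeftLeaf <;> simp_all [leftDepth]

theorem addLeftLeaf_eraseLeftLeaf {t : PTree} (h : t ≠ node []) :
    t.eraseLeftLeaf.addLeftLeaf (t.leftDepth - 1) = t := by
  fun_induction eraseLeftLeaf with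
  | case1 => exact absurd rfl h
  | case2 => simp [leftDepth, addLeftLeaf]
  | case3 c cs hc ih =>
    obtain ⟨m, hm⟩ := Nat.exists_eq_add_one_of_ne_zero (mt leftDepth_eq_zero_iff.mp hc)
    have ih := ih hc
    rw [hm, Nat.add_sub_cancel] at ih
    rw [leftDepth, hm, Nat.add_sub_cancel, addLeftLeaf, ih]

/-! A list of trees `t₀, …, t_k` is treated as the single tree in which each `tᵢ₊₁` hangs below
the root of `tᵢ`; its leftmost branch passes from `tᵢ` into `tᵢ₊₁` exactly when `tᵢ` is a
single vertex. -/

def forestEdges (F : List PTree) : ℕ := (F.map edges).sum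

def forestLeftDepth : List PTree → ℕ
  | [] => 0
  | [t] => t.leftDepth
  | node [] :: r :: rest => forestLeftDepth (r :: rest) + 1
  | node (c :: cs) :: _ :: _ => (node (c :: cs)).leftDepth

def forestAddLeftLeaf : ℕ → List PTree → List PTree
  | _, [] => []
  | j, [t] => [t.addLeftLeaf j]
  | j + 1, node [] :: r :: rest => node [] :: forestAddLeftLeaf j (r :: rest)
  | j, t :: r :: rest => t.addLeftLeaf j :: r :: rest

def forestEraseLeftLeaf : List PTree → List PTree
  | [] => []
  | [t] => [t.eraseLeftLeaf]
  | node [] :: r :: rest => node [] :: forestEraseLeftLeaf (r :: rest)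
  | t :: r :: rest => t.eraseLeftLeaf :: r :: rest

theorem length_forestAddLeftLeaf (j : ℕ) (F : List PTree) :
    (forestAddLeftLeaf j F).length = F.length := by
  fun_induction forestAddLeftLeaf <;> simp_all

theorem length_forestEraseLeftLeaf (F : List PTree) :
    (forestEraseLeftLeaf F).length = F.length := by
  fun_induction forestEraseLeftLeaf <;> simp_all

theorem leftDepth_le_forestLeftDepth (t : PTree) (rest : List PTree) :
    t.leftDepth ≤ forestLeftDepth (t :: rest) := by
  obtain ⟨_ | ⟨c, cs⟩⟩ := t <;> rcases rest with _ | ⟨r, rest⟩ <;>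
    simp [forestLeftDepth, leftDepth]

theorem forestLeftDepth_pos {F : List PTree} (h : forestEdges F ≠ 0) : 0 < forestLeftDepth F := by
  fun_cases forestLeftDepth F <;>
    simp_all [forestEdges, leftDepth, Nat.pos_iff_ne_zero, leftDepth_eq_zero_iff, edges_eq_zero_iff]

theorem forestLeftDepth_cons_of_ne_leaf {t : PTree} (ht : t ≠ node []) (rest : List PTree) :
    forestLeftDepth (t :: rest) = t.leftDepth := by
  obtain ⟨_ | ⟨c, cs⟩⟩ := t <;> rcases rest with _ | ⟨r, rest⟩ <;> simp_all [forestLeftDepth]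

theorem forestLeftDepth_leaf_cons {F : List PTree} (hF : F ≠ []) :
    forestLeftDepth (node [] :: F) = forestLeftDepth F + 1 := by
  obtain ⟨r, rest, rfl⟩ := List.exists_cons_of_ne_nil hF
  rfl

theorem forestAddLeftLeaf_succ_leaf_cons (j : ℕ) {F : List PTree} (hF : F ≠ []) :
    forestAddLeftLeaf (j + 1) (node [] :: F) = node [] :: forestAddLeftLeaf j F := by
  obtain ⟨r, rest, rfl⟩ := List.exists_cons_of_ne_nil hF
  rfl

theorem forestEraseLeftLeaf_leaf_cons {F : List PTree} (hF : F ≠ []) :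
    forestEraseLeftLeaf (node [] :: F) = node [] :: forestEraseLeftLeaf F := by
  obtain ⟨r, rest, rfl⟩ := List.exists_cons_of_ne_nil hF
  rfl

theorem le_leftDepth_of_le_forestLeftDepth {j : ℕ} {t r : PTree} {rest : List PTree}
    (hjt : ∀ i, j = i + 1 → t ≠ node []) (h : j ≤ forestLeftDepth (t :: r :: rest)) :
    j ≤ t.leftDepth := by
  by_cases ht : t = node []
  · cases j with
    | zero => exact Nat.zero_le _
    | succ i => exact absurd ht (hjt i rfl)
  · rwa [forestLeftDepth_cons_of_ne_leaf ht] at h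

theorem forestLeftDepth_forestAddLeftLeaf {j : ℕ} {F : List PTree} (hF : F ≠ [])
    (h : j ≤ forestLeftDepth F) : forestLeftDepth (forestAddLeftLeaf j F) = j + 1 := by
  fun_induction forestAddLeftLeaf with
  | case1 => exact absurd rfl hF
  | case2 j t => exact leftDepth_addLeftLeaf h
  | case3 j r rest ih =>
    rw [forestLeftDepth_leaf_cons (by simp)] at h
    rw [forestLeftDepth_leaf_cons (by simp [← List.length_pos_iff, length_forestAddLeftLeaf]),
      ih (by simp) (by omega)]
  | case4 j t r rest hjt =>
    have hj := le_leftDepth_of_le_forestLeftDepth hjt h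
    rw [forestLeftDepth_cons_of_ne_leaf (addLeftLeaf_ne_leaf j hj), leftDepth_addLeftLeaf hj]

theorem forestEdges_forestAddLeftLeaf {j : ℕ} {F : List PTree} (hF : F ≠ [])
    (h : j ≤ forestLeftDepth F) : forestEdges (forestAddLeftLeaf j F) = forestEdges F + 1 := by
  fun_induction forestAddLeftLeaf with
  | case1 => exact absurd rfl hF
  | case2 j t => simp [forestEdges, edges_addLeftLeaf h]
  | case3 j r rest ih =>
    rw [forestLeftDepth_leaf_cons (by simp)] at h
    have ih := ih (by simp) (by omega)
    simp only [forestEdges, List.map_cons, List.sum_cons] at ih ⊢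
    omega
  | case4 j t r rest hjt =>
    simp only [forestEdges, List.map_cons, List.sum_cons,
      edges_addLeftLeaf (le_leftDepth_of_le_forestLeftDepth hjt h)]
    omega

theorem forestEraseLeftLeaf_forestAddLeftLeaf {j : ℕ} {F : List PTree} (hF : F ≠ [])
    (h : j ≤ forestLeftDepth F) : forestEraseLeftLeaf (forestAddLeftLeaf j F) = F := by
  fun_induction forestAddLeftLeaf with
  | case1 => exact absurd rfl hF
  | case2 j t => simp [forestEraseLeftLeaf, eraseLeftLeaf_addLeftLeaf h]
  | case3 j r rest ih =>
    rw [forestLeftDepth_leaf_cons (by simp)] at h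
    rw [forestEraseLeftLeaf_leaf_cons (by simp [← List.length_pos_iff, length_forestAddLeftLeaf]),
      ih (by simp) (by omega)]
  | case4 j t r rest hjt =>
    have hj := le_leftDepth_of_le_forestLeftDepth hjt h
    rw [forestEraseLeftLeaf.eq_4 _ _ _ (addLeftLeaf_ne_leaf j hj), eraseLeftLeaf_addLeftLeaf hj]

theorem sub_one_le_forestLeftDepth_forestEraseLeftLeaf (F : List PTree) :
    forestLeftDepth F - 1 ≤ forestLeftDepth (forestEraseLeftLeaf F) := by
  fun_induction forestEraseLeftLeaf with
  | case1 => exact Nat.zero_le _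
  | case2 t => exact sub_one_le_leftDepth_eraseLeftLeaf t
  | case3 r rest ih =>
    rw [forestLeftDepth_leaf_cons (by simp), forestLeftDepth_leaf_cons
      (by simp [← List.length_pos_iff, length_forestEraseLeftLeaf])]
    omega
  | case4 t r rest ht =>
    rw [forestLeftDepth_cons_of_ne_leaf ht]
    exact (sub_one_le_leftDepth_eraseLeftLeaf t).trans (leftDepth_le_forestLeftDepth _ _)

theorem forestAddLeftLeaf_forestEraseLeftLeaf {F : List PTree} (h : forestEdges F ≠ 0) :
    forestAddLeftLeaf (forestLeftDepth F - 1) (forestEraseLeftLeaf F) = F := by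
  fun_induction forestEraseLeftLeaf with
  | case1 => exact absurd rfl h
  | case2 t =>
    have ht : t ≠ node [] := by simpa [forestEdges, edges_eq_zero_iff] using h
    simp [forestAddLeftLeaf, forestLeftDepth, addLeftLeaf_eraseLeftLeaf ht]
  | case3 r rest ih =>
    have hr : forestEdges (r :: rest) ≠ 0 := by simpa [forestEdges, edges_node] using h
    obtain ⟨m, hm⟩ := Nat.exists_eq_add_one_of_ne_zero (forestLeftDepth_pos hr).ne'
    have ih := ih hr
    rw [hm, Nat.add_sub_cancel] at ih
    rw [forestLeftDepth_leaf_cons (by simp), hm, Nat.add_sub_cancel,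
      forestAddLeftLeaf_succ_leaf_cons _
        (by simp [← List.length_pos_iff, length_forestEraseLeftLeaf]), ih]
  | case4 t r rest ht =>
    rw [forestLeftDepth_cons_of_ne_leaf ht, forestAddLeftLeaf.eq_4, addLeftLeaf_eraseLeftLeaf ht]
    -- `t.eraseLeftLeaf` is a single vertex only if `t.leftDepth = 1`
    intro i hi hleaf
    have := sub_one_le_leftDepth_eraseLeftLeaf t
    rw [hleaf, leftDepth] at this
    omega

abbrev Forest (k n : ℕ) : Type := {F : List PTree // F.length = k + 1 ∧ forestEdges F = n}

def forestSuccEquiv (k n : ℕ) :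
    (Σ F : Forest k n, Fin (forestLeftDepth F.1 + 1)) ≃ Forest k (n + 1) where
  toFun p := ⟨forestAddLeftLeaf p.2 p.1.1, by
    have hF : p.1.1 ≠ [] := List.ne_nil_of_length_eq_add_one p.1.2.1
    rw [length_forestAddLeftLeaf, forestEdges_forestAddLeftLeaf hF (Nat.lt_succ_iff.mp p.2.2)]
    exact ⟨p.1.2.1, congrArg (· + 1) p.1.2.2⟩⟩
  invFun F :=
    have hF : forestEdges F.1 ≠ 0 := by rw [F.2.2]; omega
    have hadd := forestAddLeftLeaf_forestEraseLeftLeaf hF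
    have hle := sub_one_le_forestLeftDepth_forestEraseLeftLeaf F.1
    ⟨⟨forestEraseLeftLeaf F.1, by
      refine ⟨(length_forestEraseLeftLeaf F.1).trans F.2.1, ?_⟩
      have hne : forestEraseLeftLeaf F.1 ≠ [] := by
        rw [← List.length_pos_iff, length_forestEraseLeftLeaf, F.2.1]; omega
      have := forestEdges_forestAddLeftLeaf hne hle
      rw [hadd, F.2.2] at this
      omega⟩, ⟨forestLeftDepth F.1 - 1, Nat.lt_succ_of_le hle⟩⟩
  left_inv := by
    rintro ⟨⟨F, hlen, hedges⟩, j, hj⟩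
    have hF : F ≠ [] := List.ne_nil_of_length_eq_add_one hlen
    have hj : j ≤ forestLeftDepth F := Nat.lt_succ_iff.mp hj
    have hF' := forestEraseLeftLeaf_forestAddLeftLeaf hF hj
    ext
    · simp [hF']
    · exact (Fin.heq_ext_iff (by simp [hF'])).mpr
        (by simp [forestLeftDepth_forestAddLeftLeaf hF hj])
  right_inv F := Subtype.ext (forestAddLeftLeaf_forestEraseLeftLeaf (by rw [F.2.2]; omega))

theorem forestLeftDepth_forestSuccEquiv (k n : ℕ)
    (p : Σ F : Forest k n, Fin (forestLeftDepth F.1 + 1)) :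
    forestLeftDepth (forestSuccEquiv k n p).1 = p.2 + 1 :=
  forestLeftDepth_forestAddLeftLeaf (List.ne_nil_of_length_eq_add_one p.1.2.1)
    (Nat.lt_succ_iff.mp p.2.2)

def forestEquivFun (k n : ℕ) :
    Forest k n ≃ {f : Fin (k + 1) → PTree // ∑ j, (f j).edges = n} :=
  (Equiv.subtypeSubtypeEquivSubtypeInter (fun F : List PTree => F.length = k + 1)
    fun F => forestEdges F = n).symm.trans <|
      (Equiv.vectorEquivFin PTree (k + 1)).subtypeEquiv fun F => by
        conv_lhs => rw [forestEdges, ← List.Vector.toList, ← List.Vector.ofFn_get F,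
          List.Vector.toList_ofFn, List.map_ofFn, List.sum_ofFn]
        rfl

instance (k : ℕ) : Unique (Forest k 0) where
  default := ⟨List.replicate (k + 1) (node []), by simp [forestEdges, edges_node]⟩
  uniq F := Subtype.ext <| List.eq_replicate_iff.mpr ⟨F.2.1, fun t ht =>
    edges_eq_zero_iff.mp (List.sum_eq_zero_iff.mp F.2.2 _ (List.mem_map_of_mem ht))⟩

theorem forestLeftDepth_replicate (k : ℕ) :
    forestLeftDepth (List.replicate (k + 1) (node [])) = k := by
  induction k with
  | zero => rfl
  | succ k ih => rw [List.replicate_succ, forestLeftDepth_leaf_cons (by simp), ih]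

end PTree

theorem List.IsChain.eq_of_head?_eq {α : Type*} {R : α → α → Prop}
    (hR : ∀ u v v', R u v → R u v' → v = v') :
    ∀ {l l' : List α}, l.IsChain R → l'.IsChain R → l.head? = l'.head? → l.length = l'.length →
      l = l'
  | [], [], _, _, _, _ => rfl
  | [_], [_], _, _, h, _ => by simpa using h
  | a :: b :: t, a' :: b' :: t', hl, hl', h, hlen => by
    obtain rfl : a = a' := by simpa using h
    rw [List.isChain_cons_cons] at hl hl'
    obtain rfl := hR _ _ _ hl.1 hl'.1
    exact congrArg (a :: ·) (List.IsChain.eq_of_head?_eq hR hl.2 hl'.2 rfl (by simpa using hlen))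
  | [], _ :: _, _, _, _, h | _ :: _, [], _, _, _, h
  | [_], _ :: _ :: _, _, _, _, h | _ :: _ :: _, [_], _, _, _, h => by simp at h

theorem List.IsChain.eq_of_getLast?_eq {α : Type*} {R : α → α → Prop}
    (hR : ∀ u u' v, R u v → R u' v → u = u') {l l' : List α} (hl : l.IsChain R)
    (hl' : l'.IsChain R) (h : l.getLast? = l'.getLast?) (hlen : l.length = l'.length) : l = l' :=
  List.reverse_injective <| List.IsChain.eq_of_head?_eq (R := fun a b => R b a)
    (fun v u u' => hR u u' v)
    (List.isChain_reverse.mpr hl) (List.isChain_reverse.mpr hl')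
    (by simpa [List.head?_reverse] using h) (by simpa using hlen)

namespace LGraph

variable (G : LGraph)

def PathsTo (v : G.V) : Type :=
  {l : List G.V // l ≠ [] ∧ l.IsChain G.E ∧ l.getLast? = some v}

def pathsEquivSigma (n : ℤ) : G.Paths n ≃ Σ v : {v // G.label v = n}, G.PathsTo v where
  toFun p := ⟨⟨p.1.getLast p.2.1, by
      obtain ⟨v, hv, hl⟩ := p.2.2.2
      rw [List.getLast?_eq_some_getLast p.2.1, Option.some.injEq] at hv
      exact hv ▸ hl⟩,
    ⟨p.1, p.2.1, p.2.2.1, List.getLast?_eq_some_getLast p.2.1⟩⟩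
  invFun q := ⟨q.2.1, q.2.2.1, q.2.2.2.1, q.1.1, q.2.2.2.2, q.1.2⟩
  left_inv _ := rfl
  right_inv := by
    rintro ⟨⟨v, hv⟩, l, hne, hch, hl⟩
    obtain rfl : l.getLast hne = v := by simpa [List.getLast?_eq_some_getLast hne] using hl
    rfl

/-- `d` measures the distance from the roots in a graph whose vertices have at most one
in-neighbour. -/
structure IsDepth (d : G.V → ℕ) : Prop where
  eq_of_adj : ∀ {u u' v}, G.E u v → G.E u' v → u = u'
  depth_eq_of_adj : ∀ {u v}, G.E u v → d v = d u + 1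
  exists_adj : ∀ {v}, d v ≠ 0 → ∃ u, G.E u v

namespace IsDepth

variable {G} {d : G.V → ℕ} (hd : G.IsDepth d)
include hd

theorem depth_getLast_cons : ∀ (a : G.V) (l : List G.V), (a :: l).IsChain G.E →
    d ((a :: l).getLast (List.cons_ne_nil a l)) = d a + l.length
  | _, [], _ => rfl
  | a, b :: l, h => by
    rw [List.isChain_cons_cons] at h
    rw [List.getLast_cons_cons, depth_getLast_cons b l h.2, hd.depth_eq_of_adj h.1,
      List.length_cons]
    ring

theorem depth_eq_head_add {v : G.V} (l : G.PathsTo v) :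
    d v = d (l.1.head l.2.1) + (l.1.length - 1) := by
  obtain ⟨_ | ⟨a, t⟩, hne, hch, hl⟩ := l
  · exact absurd rfl hne
  · rw [List.getLast?_eq_some_getLast (List.cons_ne_nil a t), Option.some.injEq] at hl
    simp [← hl, hd.depth_getLast_cons a t hch]

theorem exists_pathsTo_length (v : G.V) :
    ∀ m ≤ d v, ∃ l : G.PathsTo v, l.1.length = m + 1
  | 0, _ => ⟨⟨[v], by simp⟩, rfl⟩
  | m + 1, hm => by
    obtain ⟨l, hlen⟩ := exists_pathsTo_length v m (by omega)
    have hhead := hd.depth_eq_head_add l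
    obtain ⟨_ | ⟨a, t⟩, hne, hch, hl⟩ := l
    · exact absurd rfl hne
    simp only [List.length_cons, List.head_cons] at hlen hhead
    obtain ⟨u, hu⟩ := hd.exists_adj (v := a) (by omega)
    exact ⟨⟨u :: a :: t, by simp, List.isChain_cons_cons.mpr ⟨hu, hch⟩, by simpa using hl⟩,
      by simp [hlen]⟩

noncomputable def pathsToEquiv (v : G.V) : G.PathsTo v ≃ Fin (d v + 1) :=
  Equiv.ofBijective (fun l => ⟨d (l.1.head l.2.1), by have := hd.depth_eq_head_add l; omega⟩) <| by
    constructor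
    · intro l l' h
      have h := congrArg Fin.val h
      have hl := hd.depth_eq_head_add l
      have hl' := hd.depth_eq_head_add l'
      simp only at h
      have := List.length_pos_iff.mpr l.2.1
      have := List.length_pos_iff.mpr l'.2.1
      exact Subtype.ext <| List.IsChain.eq_of_getLast?_eq (R := G.E)
        (fun _ _ _ => hd.eq_of_adj) l.2.2.1 l'.2.2.1
        (l.2.2.2.trans l'.2.2.2.symm) (by omega)
    · rintro ⟨j, hj⟩
      obtain ⟨l, hlen⟩ := hd.exists_pathsTo_length v (d v - j) (by omega)
      refine ⟨l, Fin.ext ?_⟩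
      have := hd.depth_eq_head_add l
      simp only
      omega

theorem pathsToEquiv_apply (v : G.V) (l : G.PathsTo v) :
    (hd.pathsToEquiv v l : ℕ) = d (l.1.head l.2.1) := rfl

end IsDepth

def stepDepth (n : ℤ) (d : G.V → ℕ) : (G.step n).V → ℕ :=
  Sum.elim d fun p => d (p.1.head p.2.1) + 1

variable {G} {d : G.V → ℕ} {n : ℤ}

theorem IsDepth.step (hd : G.IsDepth d) (n : ℤ) : (G.step n).IsDepth (G.stepDepth n d) where
  eq_of_adj := by
    rintro (u | p) (u' | p') (v | q) h h' <;> simp only [LGraph.step] at h h'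
    · exact congrArg Sum.inl (hd.eq_of_adj h h')
    · exact congrArg Sum.inl (Option.some.inj (h.symm.trans h'))
  depth_eq_of_adj := by
    rintro (u | p) (v | q) h <;> simp only [LGraph.step] at h
    · exact hd.depth_eq_of_adj h
    · simp [stepDepth, ← Option.some.inj ((List.head?_eq_some_head q.2.1).symm.trans h)]
  exists_adj := by
    rintro (v | q) h
    · obtain ⟨u, hu⟩ := hd.exists_adj h
      exact ⟨.inl u, hu⟩
    · exact ⟨.inl (q.1.head q.2.1), List.head?_eq_some_head q.2.1⟩

def stepLabelSuccEquiv (hG : ∀ v, G.label v ≤ n) :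
    {v : (G.step n).V // (G.step n).label v = n + 1} ≃ G.Paths n :=
  have : IsEmpty {v // (G.step n).label (.inl v) = n + 1} :=
    ⟨fun ⟨v, hv⟩ => by have := hG v; simp only [LGraph.step, Sum.elim_inl] at hv; omega⟩
  Equiv.subtypeSum.trans <| (Equiv.emptySum _ _).trans <| Equiv.subtypeUnivEquiv fun _ => rfl

noncomputable def stepSuccEquiv (hd : G.IsDepth d) (hG : ∀ v, G.label v ≤ n) :
    (Σ v : {v // G.label v = n}, Fin (d v + 1)) ≃
      {v : (G.step n).V // (G.step n).label v = n + 1} :=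
  (Equiv.sigmaCongrRight fun v : {v // G.label v = n} => (hd.pathsToEquiv v.1).symm).trans <|
    (G.pathsEquivSigma n).symm.trans (stepLabelSuccEquiv hG).symm

theorem stepDepth_stepSuccEquiv (hd : G.IsDepth d) (hG : ∀ v, G.label v ≤ n)
    (p : Σ v : {v // G.label v = n}, Fin (d v + 1)) :
    G.stepDepth n d (stepSuccEquiv hd hG p).1 = p.2 + 1 := by
  have := hd.pathsToEquiv_apply p.1 ((hd.pathsToEquiv p.1).symm p.2)
  rw [Equiv.apply_symm_apply] at this
  exact congrArg (· + 1) this.symm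

end LGraph

def actionDepth (k : ℕ) : (n : ℕ) → (actionGraph k n).V → ℕ
  | 0 => fun i : Fin (k + 1) => i
  | n + 1 => (actionGraph k n).stepDepth n (actionDepth k n)

theorem isDepth_baseGraph (k : ℕ) : (baseGraph k).IsDepth fun i : Fin (k + 1) => i where
  eq_of_adj {u u' v} h h' := Fin.ext (by simp only [baseGraph] at h h'; omega)
  depth_eq_of_adj h := h
  exists_adj {v} h := ⟨⟨(v : Fin (k + 1)).val - 1, by omega⟩, by simp only [baseGraph]; omega⟩

theorem isDepth_actionDepth (k : ℕ) : ∀ n, (actionGraph k n).IsDepth (actionDepth k n)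
  | 0 => isDepth_baseGraph k
  | n + 1 => (isDepth_actionDepth k n).step n

theorem actionGraph_label_le (k : ℕ) : ∀ n v, (actionGraph k n).label v ≤ n
  | 0, v => by
    have := (v : Fin (k + 1)).isLt
    simp only [actionGraph, baseGraph]
    omega
  | n + 1, .inl v => by
    have := actionGraph_label_le k n v
    simp only [actionGraph, LGraph.step, Sum.elim_inl]
    omega
  | n + 1, .inr _ => by simp [actionGraph, LGraph.step]

instance (k : ℕ) : Unique {v : (actionGraph k 0).V // (actionGraph k 0).label v = (0 : ℕ)} where
  default := ⟨Fin.last k, by simp [actionGraph, baseGraph]⟩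
  uniq v := Subtype.ext <| Fin.ext <| by
    have := v.2
    simp only [actionGraph, baseGraph] at this
    simp only [Fin.val_last]
    omega

theorem actionGraph_card_label_eq (k n : ℕ) :
    Nat.card {v : (actionGraph k n).V // (actionGraph k n).label v = (n : ℤ)} = catConv k n ∧
    Nat.card {v : (actionGraph k n).V // (actionGraph k n).label v = (n : ℤ)} =
      Nat.card {f : Fin (k + 1) → PTree // ∑ j : Fin (k + 1), (f j).edges = n} := by
  obtain ⟨e, -⟩ := exists_equiv_of_succession (C := fun d => Fin (d + 1)) (fun _ j => j + 1)
    (X := fun n => {v : (actionGraph k n).V // (actionGraph k n).label v = (n : ℤ)})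
    (fun n v => actionDepth k n v.1) (fun n (F : PTree.Forest k n) => PTree.forestLeftDepth F.1)
    (Equiv.ofUnique _ _)
    (fun v => by rw [Unique.eq_default v]; exact PTree.forestLeftDepth_replicate k)
    (fun n => LGraph.stepSuccEquiv (isDepth_actionDepth k n) (actionGraph_label_le k n))
    (fun n => LGraph.stepDepth_stepSuccEquiv (isDepth_actionDepth k n) (actionGraph_label_le k n))
    (PTree.forestSuccEquiv k) (PTree.forestLeftDepth_forestSuccEquiv k) n
  have h := (Nat.card_congr e).trans (Nat.card_congr (PTree.forestEquivFun k n))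
  exact ⟨h.trans (card_sum_edges_eq k n), h⟩
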